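/- Let d ≥ 1 and let J ∈ ℂ^{d×d} be in Jordan normal form. Let κ' := min_{1≤i≤d} Re(J_{ii}) be the smallest real part of the eigenvalues of J. Then for every t ≥ 0 and all x, y ∈ ℂ^d: |⟨exp(−tJ)x, y⟩| ≤ e^{(1−κ')t} |x| |y|, where ⟨·,·⟩ is the standard Hermitian inner product on ℂ^d and |·| the associated norm. -/

import Mathlib

/-!
Split `J = D + N` into its diagonal `D` and its superdiagonal part `N`. Within a Jordan block the
diagonal is constant, so `D` and `N` commute and `exp (-tJ) = exp (-tD) exp (-tN)`. In the
`ℓ²` operator norm, `‖exp (-tD)‖ = maxᵢ e^{-t Re Jᵢᵢ} ≤ e^{-κ't}`, while `N` is a diagonal matrix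
with entries in `{0, 1}` times the permutation matrix of the cyclic shift, so `‖N‖ ≤ 1` and
`‖exp (-tN)‖ ≤ e^{t‖N‖} ≤ e^t`.
-/

open scoped Matrix

/-- A complex `d × d` matrix is in Jordan normal form if it vanishes off the diagonal and
superdiagonal, the superdiagonal entries are `0` or `1`, and a superdiagonal entry `1` forces
the two adjacent diagonal entries (eigenvalues) to coincide. -/
def IsJordanNF {d : ℕ} (J : Matrix (Fin d) (Fin d) ℂ) : Prop :=
  (∀ i j : Fin d, (j : ℕ) ≠ (i : ℕ) → (j : ℕ) ≠ (i : ℕ) + 1 → J i j = 0) ∧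
  (∀ i j : Fin d, (j : ℕ) = (i : ℕ) + 1 → J i j = 0 ∨ J i j = 1) ∧
  (∀ i j : Fin d, (j : ℕ) = (i : ℕ) + 1 → J i j = 1 → J i i = J j j)

open scoped Matrix.Norms.L2Operator

theorem NormedSpace.norm_exp_le_exp_norm (𝕂 : Type*) {𝔸 : Type*} [RCLike 𝕂] [NormedRing 𝔸]
    [NormedAlgebra 𝕂 𝔸] [CompleteSpace 𝔸] [NormOneClass 𝔸] (A : 𝔸) :
    ‖NormedSpace.exp A‖ ≤ Real.exp ‖A‖ := by
  rw [NormedSpace.exp_eq_tsum 𝕂, Real.exp_eq_exp_ℝ, NormedSpace.exp_eq_tsum ℝ]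
  refine (norm_tsum_le_tsum_norm (NormedSpace.norm_expSeries_summable' A)).trans ?_
  refine (NormedSpace.norm_expSeries_summable' A).tsum_le_tsum (fun n => ?_)
    (NormedSpace.expSeries_summable' ‖A‖)
  grw [norm_smul, norm_pow_le]
  simp

namespace Matrix

variable {n : Type*} [Fintype n] [DecidableEq n]

theorem eq_diagonal_mul_permMatrix {R : Type*} [Semiring R] (σ : Equiv.Perm n)
    {A : Matrix n n R} (hA : ∀ i j, j ≠ σ i → A i j = 0) :
    A = diagonal (fun i => A i (σ i)) * σ.permMatrix R := by
  ext i j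
  by_cases hj : j = σ i
  · subst hj; simp [Equiv.Perm.permMatrix]
  · simp [Equiv.Perm.permMatrix, hA i j hj, Ne.symm hj]

theorem l2_opNorm_le_of_eq_zero_of_ne_perm (σ : Equiv.Perm n) {A : Matrix n n ℂ}
    (hA : ∀ i j, j ≠ σ i → A i j = 0) : ‖A‖ ≤ ‖fun i => A i (σ i)‖ := by
  calc ‖A‖ = ‖diagonal (fun i => A i (σ i)) * σ.permMatrix ℂ‖ :=
        congrArg _ (eq_diagonal_mul_permMatrix σ hA)
    _ ≤ ‖diagonal (fun i => A i (σ i))‖ * ‖σ.permMatrix ℂ‖ := l2_opNorm_mul _ _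
    _ ≤ ‖fun i => A i (σ i)‖ := by grw [permMatrix_l2_opNorm_le]; simp

theorem l2_opNorm_exp_diagonal_le {v : n → ℂ} {r : ℝ} (hv : ∀ i, (v i).re ≤ r) :
    ‖NormedSpace.exp (diagonal v)‖ ≤ Real.exp r := by
  rw [exp_diagonal, l2_opNorm_diagonal]
  refine pi_norm_le_iff_of_nonneg (Real.exp_nonneg r) |>.mpr fun i => ?_
  rw [Pi.coe_exp, ← Complex.exp_eq_exp_ℂ, Complex.norm_exp]
  exact Real.exp_le_exp.mpr (hv i)

end Matrix

open Matrix

namespace IsJordanNF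

variable {d : ℕ} {J : Matrix (Fin d) (Fin d) ℂ}

theorem commute_diagonal_diag (hJ : IsJordanNF J) : Commute (diagonal J.diag) J := by
  obtain ⟨h_band, h_super, h_block⟩ := hJ
  ext i j
  rw [diagonal_mul, mul_diagonal, diag_apply, diag_apply]
  by_cases hij : (j : ℕ) = i
  · rw [Fin.ext hij]
  by_cases hsucc : (j : ℕ) = i + 1
  · rcases h_super i j hsucc with h | h
    · simp [h]
    · rw [h_block i j hsucc h, mul_comm]
  · simp [h_band i j hij hsucc]

theorem sub_diagonal_diag_apply_eq_zero (hJ : IsJordanNF J) {i j : Fin d}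
    (h : (j : ℕ) ≠ i + 1) : (J - diagonal J.diag) i j = 0 := by
  by_cases hij : j = i
  · simp [hij]
  · simp [hJ.1 i j (Fin.val_ne_of_ne hij) h, diagonal_apply_ne _ (Ne.symm hij)]

theorem norm_sub_diagonal_diag_apply_le_one (hJ : IsJordanNF J) (i j : Fin d) :
    ‖(J - diagonal J.diag) i j‖ ≤ 1 := by
  by_cases h : (j : ℕ) = i + 1
  · have hij : i ≠ j := fun hij => by simp [hij] at h
    rcases hJ.2.1 i j h with h01 | h01 <;> simp [diagonal_apply_ne _ hij, h01]
  · simp [hJ.sub_diagonal_diag_apply_eq_zero h]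

theorem l2_opNorm_sub_diagonal_diag_le_one (hJ : IsJordanNF J) :
    ‖J - diagonal J.diag‖ ≤ 1 := by
  refine (l2_opNorm_le_of_eq_zero_of_ne_perm (finRotate d) fun i j hj => ?_).trans <|
    pi_norm_le_iff_of_nonneg zero_le_one |>.mpr fun i => hJ.norm_sub_diagonal_diag_apply_le_one ..
  refine hJ.sub_diagonal_diag_apply_eq_zero fun h => hj ?_
  have : NeZero d := i.neZero
  ext
  rw [finRotate_apply, Fin.val_add, Fin.val_one', Nat.add_mod_mod, ← h, Nat.mod_eq_of_lt j.isLt]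

theorem l2_opNorm_exp_neg_smul_le [NeZero d] (hJ : IsJordanNF J) {κ t : ℝ}
    (hκ : ∀ i, κ ≤ (J i i).re) (ht : 0 ≤ t) :
    ‖NormedSpace.exp (-((t : ℂ) • J))‖ ≤ Real.exp ((1 - κ) * t) := by
  set D := diagonal J.diag
  have h_comm : Commute (-((t : ℂ) • D)) (-((t : ℂ) • (J - D))) :=
    (hJ.commute_diagonal_diag.sub_right (Commute.refl D) |>.smul_left _ |>.smul_right _).neg_left
      |>.neg_right
  have h_split : NormedSpace.exp (-((t : ℂ) • J)) =
      NormedSpace.exp (-((t : ℂ) • D)) * NormedSpace.exp (-((t : ℂ) • (J - D))) := by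
    rw [← Matrix.exp_add_of_commute _ _ h_comm, ← neg_add, ← smul_add, add_sub_cancel]
  have h_diag : ‖NormedSpace.exp (-((t : ℂ) • D))‖ ≤ Real.exp (-κ * t) := by
    rw [← diagonal_smul, diagonal_neg]
    refine l2_opNorm_exp_diagonal_le fun i => ?_
    simp only [Pi.smul_apply, diag_apply, smul_eq_mul, Complex.neg_re, Complex.mul_re,
      Complex.ofReal_re, Complex.ofReal_im, zero_mul, sub_zero, neg_mul, neg_le_neg_iff]
    linarith [mul_le_mul_of_nonneg_left (hκ i) ht]
  have h_nil : ‖NormedSpace.exp (-((t : ℂ) • (J - D)))‖ ≤ Real.exp t := by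
    -- `NormOneClass` for the operator norm needs a nonempty index type, hence `[NeZero d]`.
    refine (NormedSpace.norm_exp_le_exp_norm ℂ _).trans (Real.exp_le_exp.mpr ?_)
    rw [norm_neg, norm_smul, Complex.norm_real, Real.norm_of_nonneg ht]
    exact mul_le_of_le_one_right ht hJ.l2_opNorm_sub_diagonal_diag_le_one
  calc _ ≤ Real.exp (-κ * t) * Real.exp t := by
        rw [h_split]
        exact (l2_opNorm_mul _ _).trans <|
          mul_le_mul h_diag h_nil (norm_nonneg _) (Real.exp_nonneg _)
    _ = Real.exp ((1 - κ) * t) := by rw [← Real.exp_add]; ring_nf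

end IsJordanNF

/-- For a Jordan-normal-form matrix `J` with `κ'` the smallest real part of its eigenvalues,
`|⟨e^{-tJ} x, y⟩| ≤ e^{(1-κ')t} |x| |y|` for all `t ≥ 0` and `x, y ∈ ℂ^d`. -/
theorem jordan_exp_neg_inner_le
    {d : ℕ} (hd : 1 ≤ d)
    (J : Matrix (Fin d) (Fin d) ℂ) (hJ : IsJordanNF J)
    (κ' : ℝ) (hκ' : κ' = sInf {r : ℝ | ∃ i : Fin d, r = (J i i).re})
    (t : ℝ) (ht : 0 ≤ t) (x y : EuclideanSpace ℂ (Fin d)) :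
    ‖(inner ℂ (Matrix.toEuclideanCLM (𝕜 := ℂ) (NormedSpace.exp (-((t : ℂ) • J))) x) y : ℂ)‖ ≤
      Real.exp ((1 - κ') * t) * ‖x‖ * ‖y‖ := by
  have : NeZero d := ⟨Nat.one_le_iff_ne_zero.mp hd⟩
  have hκ (i : Fin d) : κ' ≤ (J i i).re := by
    rw [hκ']
    exact csInf_le ((Set.finite_range fun i => (J i i).re).subset
      (by rintro _ ⟨j, rfl⟩; exact ⟨j, rfl⟩)).bddBelow ⟨i, rfl⟩
  calc _ ≤ ‖toEuclideanCLM (𝕜 := ℂ) (NormedSpace.exp (-((t : ℂ) • J))) x‖ * ‖y‖ :=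
        norm_inner_le_norm _ _
    _ ≤ ‖NormedSpace.exp (-((t : ℂ) • J))‖ * ‖x‖ * ‖y‖ := by
        gcongr; exact ContinuousLinearMap.le_opNorm _ _
    _ ≤ _ := by gcongr; exact hJ.l2_opNorm_exp_neg_smul_le hκ ht
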